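/- If f is a G-invariant rational trigonometric polynomial (i.e., f(ω+γ) = f(ω) for all γ ∈ Γ*), then there exists a rational trigonometric polynomial g such that f(ω) = g(M^T ω) for all ω at which f is defined. -/

import Mathlib

noncomputable section

/-- A (complex-valued) trigonometric polynomial in `n` variables: a finite linear
combination of the exponentials `ω ↦ e^{i k·ω}`, `k ∈ ℤⁿ`. -/
def IsTrigPoly {n : ℕ} (f : (Fin n → ℝ) → ℂ) : Prop :=
  ∃ (s : Finset (Fin n → ℤ)) (c : (Fin n → ℤ) → ℂ),
    ∀ ω, f ω = ∑ k ∈ s, c k * Complex.exp (Complex.I * ∑ j, (k j : ℂ) * (ω j : ℂ))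

/-- A real-valued trigonometric polynomial in `n` variables: a finite linear
combination of `cos(k·ω)` and `sin(k·ω)`, `k ∈ ℤⁿ`. -/
def IsTrigPolyR {n : ℕ} (f : (Fin n → ℝ) → ℝ) : Prop :=
  ∃ (s : Finset (Fin n → ℤ)) (a b : (Fin n → ℤ) → ℝ),
    ∀ ω, f ω = ∑ k ∈ s,
      (a k * Real.cos (∑ j, (k j : ℝ) * ω j) + b k * Real.sin (∑ j, (k j : ℝ) * ω j))

/-- `M ∈ Mₙ(ℤ)` is a dilation matrix: all of its (complex) eigenvalues have
modulus strictly greater than 1. -/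
def IsDilation {n : ℕ} (M : Matrix (Fin n) (Fin n) ℤ) : Prop :=
  ∀ μ : ℂ, ((M.map (Int.cast : ℤ → ℂ)).charpoly).IsRoot μ → 1 < ‖μ‖

/-- The action `ω ↦ Mᵀ ω` of the transposed dilation matrix on `ℝⁿ`. -/
def MT {n : ℕ} (M : Matrix (Fin n) (Fin n) ℤ) (ω : Fin n → ℝ) : Fin n → ℝ :=
  (M.map (Int.cast : ℤ → ℝ)).transpose.mulVec ω

/-- `Γ* ⊂ ℝⁿ` is a complete set of distinct coset representatives of
`(2π M⁻ᵀ ℤⁿ)/(2π ℤⁿ)` containing `0`. -/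
def FreqReps {n : ℕ} (M : Matrix (Fin n) (Fin n) ℤ) (Γstar : Finset (Fin n → ℝ)) : Prop :=
  (0 : Fin n → ℝ) ∈ Γstar ∧
  (∀ γ ∈ Γstar, ∃ m : Fin n → ℤ, ∀ i,
    γ i = 2 * Real.pi
      * ((M.map (Int.cast : ℤ → ℝ))⁻¹.transpose.mulVec (fun j => (m j : ℝ)) i)) ∧
  (∀ m : Fin n → ℤ, ∃! γ, γ ∈ Γstar ∧ ∃ l : Fin n → ℤ, ∀ i,
    2 * Real.pi * ((M.map (Int.cast : ℤ → ℝ))⁻¹.transpose.mulVec (fun j => (m j : ℝ)) i)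
      = γ i + 2 * Real.pi * (l i : ℝ))

/-- `Γ ⊂ ℤⁿ` is a complete set of distinct coset representatives of `ℤⁿ/Mℤⁿ`. -/
def SpatialReps {n : ℕ} (M : Matrix (Fin n) (Fin n) ℤ) (Γ : Finset (Fin n → ℤ)) : Prop :=
  ∀ m : Fin n → ℤ, ∃! ν, ν ∈ Γ ∧ ∃ l : Fin n → ℤ, m = ν + M.mulVec l

/-!
Multiply numerator and denominator by the other `Γ*`-translates of the denominator: with
`Q = ∏_{γ ∈ Γ*} q(· + γ)` and `P = p · ∏_{γ ∈ Γ*, γ ≠ 0} q(· + γ)`, the product `Q` is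
`Γ*`-invariant and, by the invariance of `p / q`, `P(ω + γ) = (p / q)(ω) Q(ω)` wherever `Q(ω) ≠ 0`.
Averaging over `Γ*` turns a trigonometric polynomial into one in `Mᵀω`: the character `e^{ik·ω}`
averages to zero unless it is trivial on `Γ*`, which forces `k = Ml` with `l ∈ ℤⁿ`, and then
`e^{ik·ω} = e^{il·Mᵀω}`. The averages of `P` and `Q` are thus `a(Mᵀω)` and `b(Mᵀω)` with
`a / b = p / q`. Finally `b` is not identically zero since `q`, being analytic and not identically
zero, vanishes only on a nowhere dense set, so the finitely many translates of `q` are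
simultaneously non-zero somewhere.
-/

section CosetReps

variable {V : Type*} [AddCommGroup V]

def IsCosetReps (H L : AddSubgroup V) (S : Finset V) : Prop :=
  (∀ s ∈ S, s ∈ H) ∧ ∀ h ∈ H, ∃! s, s ∈ S ∧ h - s ∈ L

namespace IsCosetReps

variable {H L : AddSubgroup V} {S : Finset V}

@[to_additive]
theorem prod_add_left {β : Type*} [CommMonoid β] (hS : IsCosetReps H L S) {F : V → β}
    (hF : ∀ v, ∀ l ∈ L, F (v + l) = F v) {g : V} (hg : g ∈ H) :
    ∏ s ∈ S, F (g + s) = ∏ s ∈ S, F s := by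
  -- `s ↦ rep (g + s)` permutes `S`, with inverse `s ↦ rep (s - g)`.
  have hrep : ∀ v, ∃ s, v ∈ H → s ∈ S ∧ v - s ∈ L := fun v => by
    by_cases hv : v ∈ H
    · obtain ⟨s, hs, -⟩ := hS.2 v hv
      exact ⟨s, fun _ => hs⟩
    · exact ⟨0, fun h => absurd h hv⟩
  choose rep hrep using hrep
  have rep_eq : ∀ v ∈ H, ∀ s ∈ S, v - s ∈ L → rep v = s := fun v hv s hs hvs =>
    (hS.2 v hv).unique (hrep v hv) ⟨hs, hvs⟩
  have hH : ∀ s ∈ S, s ∈ H := hS.1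
  refine Finset.prod_nbij' (fun s => rep (g + s)) (fun s => rep (s - g))
    (fun s hs => (hrep _ (add_mem hg (hH s hs))).1) (fun s hs => (hrep _ (sub_mem (hH s hs) hg)).1)
    (fun s hs => ?_) (fun s hs => ?_) (fun s hs => ?_)
  · have h₁ := hrep _ (add_mem hg (hH s hs))
    refine rep_eq _ (sub_mem (hH _ h₁.1) hg) s hs ?_
    convert neg_mem h₁.2 using 1
    abel
  · have h₁ := hrep _ (sub_mem (hH s hs) hg)
    refine rep_eq _ (add_mem hg (hH _ h₁.1)) s hs ?_
    convert neg_mem h₁.2 using 1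
    abel
  · have h₁ := hrep _ (add_mem hg (hH s hs))
    simpa using hF (rep (g + s)) _ h₁.2

theorem sum_addChar_eq_zero {R : Type*} [CommRing R] [NoZeroDivisors R] (hS : IsCosetReps H L S)
    (ψ : AddChar V R) (hψ : ∀ l ∈ L, ψ l = 1) {g : V} (hg : g ∈ S) (hψg : ψ g ≠ 1) :
    ∑ s ∈ S, ψ s = 0 := by
  have hshift : ∑ s ∈ S, ψ (g + s) = ∑ s ∈ S, ψ s :=
    hS.sum_add_left (fun v l hl => by rw [AddChar.map_add_eq_mul, hψ l hl, mul_one]) (hS.1 g hg)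
  simp only [AddChar.map_add_eq_mul, ← Finset.mul_sum] at hshift
  have hfactor : (ψ g - 1) * ∑ s ∈ S, ψ s = 0 := by rw [sub_mul, hshift, one_mul, sub_self]
  exact (mul_eq_zero.1 hfactor).resolve_left (sub_ne_zero.2 hψg)

theorem addChar_eq_one_of_mem {R : Type*} [CommMonoid R] (hS : IsCosetReps H L S)
    (ψ : AddChar V R) (hψL : ∀ l ∈ L, ψ l = 1) (hψS : ∀ s ∈ S, ψ s = 1) {h : V} (hh : h ∈ H) :
    ψ h = 1 := by
  obtain ⟨s, ⟨hs, hhs⟩, -⟩ := hS.2 h hh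
  rw [← add_sub_cancel s h, AddChar.map_add_eq_mul, hψS s hs, hψL _ hhs, one_mul]

end IsCosetReps

end CosetReps

section TrigPoly

open Complex Matrix
open scoped Real

variable {n : ℕ}

def trigChar (k : Fin n → ℤ) : AddChar (Fin n → ℝ) ℂ where
  toFun ω := exp (((Int.cast ∘ k) ⬝ᵥ ω : ℝ) * I)
  map_zero_eq_one' := by simp
  map_add_eq_mul' a b := by rw [dotProduct_add, ofReal_add, add_mul, exp_add]

theorem trigChar_apply (k : Fin n → ℤ) (ω : Fin n → ℝ) :
    trigChar k ω = exp (((Int.cast ∘ k) ⬝ᵥ ω : ℝ) * I) := rfl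

theorem trigChar_apply_eq_exp_sum (k : Fin n → ℤ) (ω : Fin n → ℝ) :
    trigChar k ω = exp (I * ∑ j, (k j : ℂ) * (ω j : ℂ)) := by
  simp [trigChar_apply, dotProduct, mul_comm]

theorem trigChar_add (k k' : Fin n → ℤ) : trigChar (k + k') = trigChar k * trigChar k' := by
  ext ω
  have hcast : (Int.cast ∘ (k + k') : Fin n → ℝ) = Int.cast ∘ k + Int.cast ∘ k' :=
    funext fun j => Int.cast_add _ _
  rw [AddChar.mul_apply, trigChar_apply, hcast, add_dotProduct, ofReal_add, add_mul, exp_add]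
  rfl

theorem trigChar_zero : trigChar (0 : Fin n → ℤ) = 1 := by
  ext ω
  simp [trigChar_apply]

theorem isTrigPoly_iff_mem_span {f : (Fin n → ℝ) → ℂ} :
    IsTrigPoly f ↔ f ∈ Submodule.span ℂ (Set.range fun k => ⇑(trigChar k)) := by
  constructor
  · rintro ⟨s, c, hf⟩
    have hsum : f = ∑ k ∈ s, c k • ⇑(trigChar k) := by
      ext ω
      simp [hf, trigChar_apply_eq_exp_sum]
    rw [hsum]
    exact Submodule.sum_mem _ fun k _ => Submodule.smul_mem _ _ (Submodule.subset_span ⟨k, rfl⟩)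
  · intro hf
    obtain ⟨c, rfl⟩ := Finsupp.mem_span_range_iff_exists_finsupp.1 hf
    exact ⟨c.support, c, fun ω => by simp [Finsupp.sum, trigChar_apply_eq_exp_sum]⟩

def trigPolys (n : ℕ) : Subalgebra ℂ ((Fin n → ℝ) → ℂ) :=
  (Submodule.span ℂ (Set.range fun k => ⇑(trigChar k))).toSubalgebra
    (Submodule.subset_span ⟨0, by simp only [trigChar_zero, AddChar.coe_one]⟩)
    fun f g hf hg => by
      have hfg := Submodule.mul_mem_mul hf hg
      rw [Submodule.span_mul_span] at hfg
      refine Submodule.span_le.2 ?_ hfg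
      rintro _ ⟨_, ⟨k, rfl⟩, _, ⟨k', rfl⟩, rfl⟩
      exact Submodule.subset_span ⟨k + k', by simp only [trigChar_add, AddChar.coe_mul]⟩

theorem isTrigPoly_iff_mem_trigPolys {f : (Fin n → ℝ) → ℂ} : IsTrigPoly f ↔ f ∈ trigPolys n :=
  isTrigPoly_iff_mem_span

theorem IsTrigPoly.mul {f g : (Fin n → ℝ) → ℂ} (hf : IsTrigPoly f) (hg : IsTrigPoly g) :
    IsTrigPoly (fun ω => f ω * g ω) :=
  isTrigPoly_iff_mem_trigPolys.2 <|
    mul_mem (isTrigPoly_iff_mem_trigPolys.1 hf) (isTrigPoly_iff_mem_trigPolys.1 hg)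

theorem IsTrigPoly.prod {ι : Type*} {s : Finset ι} {f : ι → (Fin n → ℝ) → ℂ}
    (hf : ∀ i ∈ s, IsTrigPoly (f i)) : IsTrigPoly (fun ω => ∏ i ∈ s, f i ω) := by
  simpa only [isTrigPoly_iff_mem_trigPolys, Finset.prod_fn] using
    Subalgebra.prod_mem _ fun i hi => isTrigPoly_iff_mem_trigPolys.1 (hf i hi)

theorem IsTrigPoly.comp_add_right {f : (Fin n → ℝ) → ℂ} (hf : IsTrigPoly f) (γ : Fin n → ℝ) :
    IsTrigPoly (fun ω => f (ω + γ)) := by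
  obtain ⟨s, c, hf⟩ := hf
  refine ⟨s, fun k => c k * trigChar k γ, fun ω => ?_⟩
  simp only [hf, ← trigChar_apply_eq_exp_sum, AddChar.map_add_eq_mul]
  exact Finset.sum_congr rfl fun k _ => by ring

theorem analyticAt_trigChar (k : Fin n → ℤ) (ω : Fin n → ℝ) : AnalyticAt ℝ (trigChar k) ω := by
  have hdot : AnalyticAt ℝ (fun x : Fin n → ℝ => (Int.cast ∘ k) ⬝ᵥ x) ω :=
    Finset.analyticAt_fun_sum _ fun j _ =>
      analyticAt_const.mul ((ContinuousLinearMap.proj (R := ℝ) j).analyticAt ω)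
  exact analyticAt_cexp.restrictScalars.comp
    (((ofRealCLM.analyticAt _).comp hdot).mul analyticAt_const)

theorem IsTrigPoly.analyticOnNhd {f : (Fin n → ℝ) → ℂ} (hf : IsTrigPoly f) :
    AnalyticOnNhd ℝ f Set.univ := by
  obtain ⟨s, c, hf⟩ := hf
  simp only [funext hf, ← trigChar_apply_eq_exp_sum]
  exact fun ω _ => Finset.analyticAt_fun_sum _ fun k _ =>
    analyticAt_const.mul (analyticAt_trigChar k ω)

theorem AnalyticOnNhd.dense_setOf_ne_zero {𝕜 E F : Type*} [NontriviallyNormedField 𝕜]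
    [NormedAddCommGroup E] [NormedSpace 𝕜 E] [PreconnectedSpace E]
    [NormedAddCommGroup F] [NormedSpace 𝕜 F] {f : E → F} (hf : AnalyticOnNhd 𝕜 f Set.univ)
    (h : ∃ x, f x ≠ 0) : Dense {x | f x ≠ 0} := by
  obtain ⟨y, hy⟩ := h
  have hzero : interior {x | f x = 0} = ∅ := by
    refine Set.eq_empty_of_forall_notMem fun x hx => hy ?_
    exact hf.eqOn_zero_of_preconnected_of_eventuallyEq_zero isPreconnected_univ (Set.mem_univ x)
      (Filter.mem_of_superset (mem_interior_iff_mem_nhds.1 hx) fun z hz => hz) (Set.mem_univ y)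
  simpa only [Set.compl_ofPred] using interior_eq_empty_iff_dense_compl.1 hzero

theorem IsTrigPoly.exists_forall_add_ne_zero {q : (Fin n → ℝ) → ℂ} (hq : IsTrigPoly q)
    (hq0 : ∃ ω, q ω ≠ 0) (S : Finset (Fin n → ℝ)) : ∃ ω, ∀ γ ∈ S, q (ω + γ) ≠ 0 := by
  obtain ⟨ω₀, hω₀⟩ := hq0
  have hdense : Dense (⋂ γ ∈ (S : Set (Fin n → ℝ)), {ω | q (ω + γ) ≠ 0}) :=
    dense_biInter_of_isOpen
      (fun γ _ => isOpen_ne_fun (hq.comp_add_right γ).analyticOnNhd.continuous continuous_const)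
      S.countable_toSet
      fun γ _ => (hq.comp_add_right γ).analyticOnNhd.dense_setOf_ne_zero ⟨ω₀ - γ, by simpa⟩
  obtain ⟨ω, hω⟩ := hdense.nonempty
  exact ⟨ω, by simpa using hω⟩

def matrixLattice (c : ℝ) (A : Matrix (Fin n) (Fin n) ℝ) : AddSubgroup (Fin n → ℝ) :=
  ((c • A.mulVecLin).toAddMonoidHom.comp ((Int.castAddHom ℝ).compLeft (Fin n))).range

theorem mem_matrixLattice {c : ℝ} {A : Matrix (Fin n) (Fin n) ℝ} {v : Fin n → ℝ} :
    v ∈ matrixLattice c A ↔ ∃ m : Fin n → ℤ, c • (A *ᵥ (Int.cast ∘ m)) = v :=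
  Iff.rfl

abbrev twoPiLattice (n : ℕ) : AddSubgroup (Fin n → ℝ) := matrixLattice (2 * π) 1

abbrev dualLattice (M : Matrix (Fin n) (Fin n) ℤ) : AddSubgroup (Fin n → ℝ) :=
  matrixLattice (2 * π) (M.map (Int.cast : ℤ → ℝ))⁻¹ᵀ

theorem sub_mem_twoPiLattice_iff {x y : Fin n → ℝ} :
    x - y ∈ twoPiLattice n ↔ ∃ l : Fin n → ℤ, ∀ i, x i = y i + 2 * π * l i := by
  simp only [mem_matrixLattice, one_mulVec, funext_iff, Pi.smul_apply, Pi.sub_apply,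
    Function.comp_apply, smul_eq_mul]
  exact exists_congr fun l => forall_congr' fun i => by constructor <;> intro h <;> linarith

theorem FreqReps.isCosetReps {M : Matrix (Fin n) (Fin n) ℤ} {Γstar : Finset (Fin n → ℝ)}
    (hΓ : FreqReps M Γstar) : IsCosetReps (dualLattice M) (twoPiLattice n) Γstar := by
  refine ⟨fun γ hγ => ?_, fun h hh => ?_⟩
  · obtain ⟨m, hm⟩ := hΓ.2.1 γ hγ
    exact mem_matrixLattice.2 ⟨m, funext fun i => (hm i).symm⟩
  · obtain ⟨m, rfl⟩ := mem_matrixLattice.1 hh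
    simpa only [sub_mem_twoPiLattice_iff, Pi.smul_apply, smul_eq_mul, Function.comp_def] using
      hΓ.2.2 m

theorem trigChar_twoPi_smul_eq_one_iff (k : Fin n → ℤ) (w : Fin n → ℝ) :
    trigChar k ((2 * π) • w) = 1 ↔ ∃ z : ℤ, (Int.cast ∘ k) ⬝ᵥ w = z := by
  rw [trigChar_apply, exp_eq_one_iff]
  refine exists_congr fun z => ?_
  rw [dotProduct_smul, smul_eq_mul,
    show (z : ℂ) * (2 * π * I) = ((2 * π * z : ℝ) : ℂ) * I by push_cast; ring,
    mul_left_inj' I_ne_zero, ofReal_inj, mul_right_inj' (by positivity)]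

theorem trigChar_eq_one_of_mem_twoPiLattice (k : Fin n → ℤ) {l : Fin n → ℝ}
    (hl : l ∈ twoPiLattice n) : trigChar k l = 1 := by
  obtain ⟨m, rfl⟩ := mem_matrixLattice.1 hl
  rw [one_mulVec, trigChar_twoPi_smul_eq_one_iff]
  exact ⟨k ⬝ᵥ m, by simp [dotProduct]⟩

theorem IsTrigPoly.apply_add_of_mem_twoPiLattice {f : (Fin n → ℝ) → ℂ} (hf : IsTrigPoly f)
    (v : Fin n → ℝ) {l : Fin n → ℝ} (hl : l ∈ twoPiLattice n) : f (v + l) = f v := by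
  obtain ⟨s, c, hf⟩ := hf
  simp only [hf, ← trigChar_apply_eq_exp_sum, AddChar.map_add_eq_mul,
    trigChar_eq_one_of_mem_twoPiLattice _ hl, mul_one]

theorem trigChar_MT (M : Matrix (Fin n) (Fin n) ℤ) (l : Fin n → ℤ) (ω : Fin n → ℝ) :
    trigChar l (MT M ω) = trigChar (M *ᵥ l) ω := by
  have hcast : (Int.cast ∘ (M *ᵥ l) : Fin n → ℝ) = M.map Int.cast *ᵥ (Int.cast ∘ l) :=
    funext fun i => (Int.castRingHom ℝ).map_mulVec M l i
  rw [trigChar_apply, trigChar_apply, MT, dotProduct_mulVec, vecMul_transpose, hcast]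

theorem IsDilation.det_ne_zero {M : Matrix (Fin n) (Fin n) ℤ} (hM : IsDilation M) :
    M.det ≠ 0 := by
  intro h
  have hroot : (M.map (Int.cast : ℤ → ℂ)).charpoly.IsRoot 0 := by
    have hcoeff := det_eq_sign_charpoly_coeff (M.map (Int.cast : ℤ → ℂ))
    rw [← Int.cast_det, h, Int.cast_zero, eq_comm, mul_eq_zero] at hcoeff
    rw [Polynomial.IsRoot, ← Polynomial.coeff_zero_eq_eval_zero]
    exact hcoeff.resolve_left (pow_ne_zero _ (by norm_num))
  exact absurd (hM 0 hroot) (by norm_num)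

theorem exists_eq_mulVec_of_trigChar_eq_one {M : Matrix (Fin n) (Fin n) ℤ} (hM : IsDilation M)
    {Γstar : Finset (Fin n → ℝ)} (hΓ : FreqReps M Γstar) {k : Fin n → ℤ}
    (hk : ∀ γ ∈ Γstar, trigChar k γ = 1) : ∃ l, k = M *ᵥ l := by
  set A := M.map (Int.cast : ℤ → ℝ)
  -- Evaluating the character at `2π M⁻ᵀ eᵢ ∈ dualLattice M` shows that `M⁻¹ k` is integral.
  have hint : ∀ i, ∃ z : ℤ, (A⁻¹ *ᵥ (Int.cast ∘ k)) i = z := fun i => by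
    have hi := hΓ.isCosetReps.addChar_eq_one_of_mem (trigChar k)
      (fun l hl => trigChar_eq_one_of_mem_twoPiLattice k hl) hk
      (mem_matrixLattice.2 ⟨Pi.single i 1, rfl⟩)
    rw [trigChar_twoPi_smul_eq_one_iff, dotProduct_mulVec, vecMul_transpose] at hi
    simpa [Function.comp_def, Pi.single_apply, dotProduct] using hi
  choose z hz using hint
  refine ⟨z, funext fun j => ?_⟩
  have hdet : IsUnit A.det := by
    rw [← Int.cast_det]
    exact isUnit_iff_ne_zero.2 (Int.cast_ne_zero.2 hM.det_ne_zero)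
  have hk := congrFun (congrArg (A *ᵥ ·) (funext hz)) j
  rw [mulVec_mulVec, mul_nonsing_inv _ hdet, one_mulVec] at hk
  have hMz : ((M *ᵥ z) j : ℝ) = (A *ᵥ fun x => (z x : ℝ)) j :=
    (Int.castRingHom ℝ).map_mulVec M z j
  exact Int.cast_injective (α := ℝ) (hk.trans hMz.symm)

theorem exists_isTrigPoly_MT_eq_sum_add {M : Matrix (Fin n) (Fin n) ℤ} (hM : IsDilation M)
    {Γstar : Finset (Fin n → ℝ)} (hΓ : FreqReps M Γstar) {f : (Fin n → ℝ) → ℂ}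
    (hf : IsTrigPoly f) :
    ∃ a, IsTrigPoly a ∧ ∀ ω, a (MT M ω) = ∑ γ ∈ Γstar, f (ω + γ) := by
  simp only [isTrigPoly_iff_mem_span] at hf ⊢
  induction hf using Submodule.span_induction with
  | mem _ hk =>
    obtain ⟨k, rfl⟩ := hk
    simp only [AddChar.map_add_eq_mul, ← Finset.mul_sum]
    by_cases htriv : ∀ γ ∈ Γstar, trigChar k γ = 1
    · obtain ⟨l, rfl⟩ := exists_eq_mulVec_of_trigChar_eq_one hM hΓ htriv
      refine ⟨(Γstar.card : ℂ) • ⇑(trigChar l),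
        Submodule.smul_mem _ _ (Submodule.subset_span ⟨l, rfl⟩), fun ω => ?_⟩
      rw [Finset.sum_congr rfl htriv, Pi.smul_apply, trigChar_MT]
      simp [mul_comm]
    · push Not at htriv
      obtain ⟨γ, hγ, hne⟩ := htriv
      refine ⟨0, Submodule.zero_mem _, fun ω => ?_⟩
      rw [hΓ.isCosetReps.sum_addChar_eq_zero _
        (fun l hl => trigChar_eq_one_of_mem_twoPiLattice k hl) hγ hne, mul_zero, Pi.zero_apply]
  | zero => exact ⟨0, Submodule.zero_mem _, fun ω => by simp⟩
  | add f g _ _ hf hg =>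
    obtain ⟨a, ha, haf⟩ := hf
    obtain ⟨b, hb, hbg⟩ := hg
    exact ⟨a + b, add_mem ha hb, fun ω => by simp [haf, hbg, Finset.sum_add_distrib]⟩
  | smul c f _ hf =>
    obtain ⟨a, ha, haf⟩ := hf
    exact ⟨c • a, Submodule.smul_mem _ c ha, fun ω => by simp [haf, Finset.mul_sum]⟩

theorem FreqReps.prod_add_add {M : Matrix (Fin n) (Fin n) ℤ} {Γstar : Finset (Fin n → ℝ)}
    (hΓ : FreqReps M Γstar) {q : (Fin n → ℝ) → ℂ} (hq : IsTrigPoly q) {γ : Fin n → ℝ}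
    (hγ : γ ∈ Γstar) (ω : Fin n → ℝ) :
    ∏ γ' ∈ Γstar, q (ω + γ + γ') = ∏ γ' ∈ Γstar, q (ω + γ') := by
  simp only [add_assoc]
  exact hΓ.isCosetReps.prod_add_left (F := fun v => q (ω + v))
    (fun v l hl => by rw [← add_assoc, hq.apply_add_of_mem_twoPiLattice _ hl])
    (hΓ.isCosetReps.1 γ hγ)

theorem FreqReps.mul_prod_erase_add {M : Matrix (Fin n) (Fin n) ℤ} {Γstar : Finset (Fin n → ℝ)}
    (hΓ : FreqReps M Γstar) {q : (Fin n → ℝ) → ℂ} (hq : IsTrigPoly q) {γ : Fin n → ℝ}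
    (hγ : γ ∈ Γstar) (ω : Fin n → ℝ) :
    q (ω + γ) * ∏ γ' ∈ Γstar.erase 0, q (ω + γ + γ') = ∏ γ' ∈ Γstar, q (ω + γ') := by
  rw [← hΓ.prod_add_add hq hγ ω, ← Finset.mul_prod_erase _ _ hΓ.1, add_zero]

end TrigPoly

theorem Ginvariant_is_ratTrigPoly_in_MT (n : ℕ) (M : Matrix (Fin n) (Fin n) ℤ)
    (hdil : IsDilation M)
    (Γstar : Finset (Fin n → ℝ)) (hΓstar : FreqReps M Γstar)
    (p q : (Fin n → ℝ) → ℂ) (hp : IsTrigPoly p) (hq : IsTrigPoly q)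
    (hq0 : ∃ ω, q ω ≠ 0)
    (hGinv : ∀ γ ∈ Γstar, ∀ ω : Fin n → ℝ, q ω ≠ 0 → q (ω + γ) ≠ 0 →
      p (ω + γ) / q (ω + γ) = p ω / q ω) :
    ∃ a b : (Fin n → ℝ) → ℂ, IsTrigPoly a ∧ IsTrigPoly b ∧ (∃ ω, b ω ≠ 0) ∧
      ∀ ω : Fin n → ℝ, q ω ≠ 0 → b (MT M ω) ≠ 0 →
        p ω / q ω = a (MT M ω) / b (MT M ω) := by
  obtain ⟨a, ha, haP⟩ := exists_isTrigPoly_MT_eq_sum_add hdil hΓstar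
    (hp.mul (IsTrigPoly.prod (s := Γstar.erase 0) fun γ _ => hq.comp_add_right γ))
  obtain ⟨b, hb, hbQ⟩ := exists_isTrigPoly_MT_eq_sum_add hdil hΓstar
    (IsTrigPoly.prod (s := Γstar) fun γ _ => hq.comp_add_right γ)
  have hN : (Γstar.card : ℂ) ≠ 0 := Nat.cast_ne_zero.2 (Finset.card_ne_zero_of_mem hΓstar.1)
  have hbQ' : ∀ ω, b (MT M ω) = Γstar.card * ∏ γ ∈ Γstar, q (ω + γ) := fun ω => by
    rw [hbQ, Finset.sum_congr rfl fun γ hγ => hΓstar.prod_add_add hq hγ ω, Finset.sum_const,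
      nsmul_eq_mul]
  refine ⟨a, b, ha, hb, ?_, fun ω hqω hbω => ?_⟩
  · obtain ⟨ω, hω⟩ := hq.exists_forall_add_ne_zero hq0 Γstar
    exact ⟨MT M ω, by rw [hbQ']; exact mul_ne_zero hN (Finset.prod_ne_zero_iff.2 hω)⟩
  have hQω : ∏ γ ∈ Γstar, q (ω + γ) ≠ 0 := right_ne_zero_of_mul (hbQ' ω ▸ hbω)
  have hqγ : ∀ γ ∈ Γstar, q (ω + γ) ≠ 0 := Finset.prod_ne_zero_iff.1 hQω
  have haP' : a (MT M ω) = Γstar.card * (p ω / q ω * ∏ γ ∈ Γstar, q (ω + γ)) := by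
    rw [haP, ← nsmul_eq_mul, ← Finset.sum_const]
    refine Finset.sum_congr rfl fun γ hγ => ?_
    rw [← hGinv γ hγ ω hqω (hqγ γ hγ), ← hΓstar.mul_prod_erase_add hq hγ ω, ← mul_assoc,
      div_mul_cancel₀ _ (hqγ γ hγ)]
  rw [haP', hbQ', mul_div_mul_left _ _ hN, mul_div_assoc, div_self hQω, mul_one]
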